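/- Assume the symmetric unisolvent setup: B = {f_1,…,f_N} is a linearly independent symmetric set of functions, F = span(B), P = {a_1,…,a_N} is a symmetric set of N points, and the interpolation problem is unisolvent. For each partition λ of n choose a point w_λ ∈ ℝ^n of type λ and set H_λ = Stab(w_λ) ≤ S_n. Let v_{λμ} be the number of H_λ-orbits of the S_n-orbit of w_μ, let X_μ be the number of S_n-orbits of P of type μ, and let r_λ be the number of H_λ-orbits of the set B. Then for every partition λ of n: Σ_{μ a partition of n} v_{λμ} · X_μ = r_λ. -/

import Mathlib

/-- The action of `S_n` on `ℝ^n` by permuting coordinates: `σ • x = x ∘ σ⁻¹`. -/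
def psmul {n : ℕ} (σ : Equiv.Perm (Fin n)) (x : Fin n → ℝ) : Fin n → ℝ := x ∘ ⇑σ⁻¹

/-- The action of `S_n` on functions `ℝ^n → ℝ`: `(σ • f)(x) = f(σ⁻¹ • x)`. -/
def fsmul {n : ℕ} (σ : Equiv.Perm (Fin n)) (f : (Fin n → ℝ) → ℝ) : (Fin n → ℝ) → ℝ :=
  fun x => f (psmul σ⁻¹ x)

/-- The `S_n`-orbit of a point `x ∈ ℝ^n`. -/
def porbit {n : ℕ} (x : Fin n → ℝ) : Set (Fin n → ℝ) := {y | ∃ σ, psmul σ x = y}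

/-- The type of a point `x ∈ ℝ^n`: the multiset of its fiber sizes. -/
noncomputable def ptype {n : ℕ} (x : Fin n → ℝ) : Multiset ℕ :=
  (Finset.image x Finset.univ).val.map fun v => (Finset.univ.filter fun j => x j = v).card

/-- The stabilizer `Stab(w) = {σ ∈ S_n : σ • w = w}` of `w ∈ ℝ^n`. -/
def stab {n : ℕ} (w : Fin n → ℝ) : Set (Equiv.Perm (Fin n)) := {σ | psmul σ w = w}

/-- The orbit of a point under the action of a set of permutations. -/
def orbitUnder {n : ℕ} (H : Set (Equiv.Perm (Fin n))) (x : Fin n → ℝ) : Set (Fin n → ℝ) :=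
  {y | ∃ σ ∈ H, psmul σ x = y}

/-- The orbit of a function under the action of a set of permutations. -/
def forbitUnder {n : ℕ} (H : Set (Equiv.Perm (Fin n))) (g : (Fin n → ℝ) → ℝ) :
    Set ((Fin n → ℝ) → ℝ) := {h | ∃ σ ∈ H, fsmul σ g = h}

/-- The number of orbits of `S ⊆ ℝ^n` under the action of `H`. -/
noncomputable def numOrbitsUnder {n : ℕ} (H : Set (Equiv.Perm (Fin n)))
    (S : Set (Fin n → ℝ)) : ℕ :=
  {O : Set (Fin n → ℝ) | ∃ x ∈ S, O = orbitUnder H x}.ncard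

/-- The number of orbits of a set of functions under the action of `H`. -/
noncomputable def fnumOrbitsUnder {n : ℕ} (H : Set (Equiv.Perm (Fin n)))
    (S : Set ((Fin n → ℝ) → ℝ)) : ℕ :=
  {O : Set ((Fin n → ℝ) → ℝ) | ∃ g ∈ S, O = forbitUnder H g}.ncard

/-- The Lagrange interpolation problem with interpolation space `F` and nodes
`a 1, …, a N` is unisolvent. -/
def Unisolvent {n N : ℕ} (F : Submodule ℝ ((Fin n → ℝ) → ℝ))
    (a : Fin N → (Fin n → ℝ)) : Prop :=
  ∀ b : Fin N → ℝ, ∃! f : F, ∀ i, (f : (Fin n → ℝ) → ℝ) (a i) = b i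

/-! Write `H = Stab(w_λ)`. The right-hand side counts the `H`-orbits on `B`; the left-hand side
counts the `H`-orbits on `P`, sorted by the `S_n`-orbit containing them, because the number of
`H`-orbits on the `S_n`-orbit of a point depends only on its type: two points of the same type
agree, after permuting coordinates, up to a relabelling of their values, and relabelling commutes
with the action of `S_n`.

The two orbit counts agree by Burnside's lemma, since every `σ ∈ S_n` has as many fixed points on
`P` as on `B`. Indeed, unisolvence makes the collocation matrix `M = (φ p)_{p ∈ P, φ ∈ B}`
invertible, and `φ (σ • p) = (σ⁻¹ • φ) p` means `M` intertwines the permutation matrices of `σ` on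
`P` and on `B`; similar matrices have equal traces, and the trace of a permutation matrix counts
fixed points. -/

open Equiv MulAction
open scoped Function

theorem Finset.exists_equiv_of_map_val_eq {α β γ : Type*} [DecidableEq γ] {s : Finset α}
    {t : Finset β} {f : α → γ} {g : β → γ} (h : s.val.map f = t.val.map g) :
    ∃ e : s ≃ t, ∀ v, g (e v) = f v := by
  have hfiber : ∀ c, Fintype.card {v : s // f v = c} = Fintype.card {v : t // g v = c} := by
    intro c
    have hcount := congrArg (Multiset.count c) h
    simp only [Multiset.count_map, eq_comm (a := c)] at hcount
    simp only [Fintype.card_subtype, Finset.univ_eq_attach]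
    rw [Finset.filter_attach (fun a => f a = c), Finset.filter_attach (fun a => g a = c),
      Finset.card_map, Finset.card_map, Finset.card_attach, Finset.card_attach]
    exact hcount
  exact ⟨Equiv.ofFiberEquiv (f := fun v : s => f v) (g := fun v : t => g v)
    fun c => Fintype.equivOfCardEq (hfiber c),
    Equiv.ofFiberEquiv_map (f := fun v : s => f v) (g := fun v : t => g v) _⟩

theorem Matrix.ncard_fixedPoints_eq_of_bijective_mulVec {X Y K : Type*} [Fintype X] [Fintype Y]
    [DecidableEq X] [DecidableEq Y] [CommRing K] [CharZero K] {M : Matrix X Y K}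
    (hM : Function.Bijective M.mulVec) {π : Perm X} {ρ : Perm Y}
    (hMπρ : ∀ x y, M (π x) (ρ y) = M x y) :
    (Function.fixedPoints π).ncard = (Function.fixedPoints ρ).ncard := by
  let L := LinearEquiv.ofBijective (Matrix.toLin' M) hM
  let N := LinearMap.toMatrix' L.symm.toLinearMap
  have hMN : M * N = 1 := Matrix.toLin'.injective <| LinearMap.ext fun v => by
    simp only [N, Matrix.toLin'_mul, LinearMap.comp_apply, Matrix.toLin'_toMatrix',
      Matrix.toLin'_one, LinearMap.id_apply]
    exact L.apply_symm_apply v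
  have hNM : N * M = 1 := Matrix.toLin'.injective <| LinearMap.ext fun v => by
    simp only [N, Matrix.toLin'_mul, LinearMap.comp_apply, Matrix.toLin'_toMatrix',
      Matrix.toLin'_one, LinearMap.id_apply]
    exact L.symm_apply_apply v
  have hπρ : π.permMatrix K * M = M * ρ.permMatrix K := by
    rw [PEquiv.toMatrix_toPEquiv_mul, PEquiv.mul_toMatrix_toPEquiv]
    ext x y
    simpa using hMπρ x (ρ.symm y)
  have htrace : (π.permMatrix K).trace = (ρ.permMatrix K).trace := calc
    (π.permMatrix K).trace = (π.permMatrix K * M * N).trace := by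
      rw [Matrix.mul_assoc, hMN, Matrix.mul_one]
    _ = (M * (ρ.permMatrix K * N)).trace := by rw [hπρ, Matrix.mul_assoc]
    _ = (ρ.permMatrix K).trace := by
      rw [Matrix.trace_mul_comm, Matrix.mul_assoc, hNM, Matrix.mul_one]
  rw [Matrix.trace_permutation, Matrix.trace_permutation] at htrace
  exact_mod_cast htrace

theorem MulAction.card_orbitRel_quotient_eq_of_ncard_fixedBy_eq {G X Y : Type*} [Group G]
    [Finite G] [MulAction G X] [MulAction G Y] [Finite X] [Finite Y]
    (h : ∀ g : G, (fixedBy X g).ncard = (fixedBy Y g).ncard) :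
    Nat.card (orbitRel.Quotient G X) = Nat.card (orbitRel.Quotient G Y) := by
  classical
  have := Fintype.ofFinite G
  have := Fintype.ofFinite X
  have := Fintype.ofFinite Y
  have hX := sum_card_fixedBy_eq_card_orbits_mul_card_group G X
  have hY := sum_card_fixedBy_eq_card_orbits_mul_card_group G Y
  simp only [← Nat.card_eq_fintype_card, Nat.card_coe_set_eq, h] at hX hY
  exact Nat.eq_of_mul_eq_mul_right Nat.card_pos (hX.symm.trans hY)

theorem SubMulAction.ncard_orbits_eq_card_orbitRel_quotient {G X : Type*} [Group G]
    [MulAction G X] (S : SubMulAction G X) :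
    {O : Set X | ∃ x ∈ S, O = orbit G x}.ncard = Nat.card (orbitRel.Quotient G S) := by
  have hinj : Function.Injective fun q : orbitRel.Quotient G S => Subtype.val '' q.orbit :=
    (Set.image_injective.mpr Subtype.val_injective).comp orbitRel.Quotient.orbit_injective
  rw [← Set.ncard_range_of_injective hinj]
  congr 1
  ext O
  constructor
  · rintro ⟨x, hx, rfl⟩
    exact ⟨⟦⟨x, hx⟩⟧, SubMulAction.val_image_orbit _⟩
  · rintro ⟨q, rfl⟩
    induction q using Quotient.inductionOn' with | h x =>
    exact ⟨x, x.2, SubMulAction.val_image_orbit x⟩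

section PermutationAction

variable {n : ℕ}

instance : MulAction (Perm (Fin n)) (Fin n → ℝ) where
  smul := psmul
  one_smul _ := rfl
  mul_smul _ _ _ := rfl

instance : MulAction (Perm (Fin n)) ((Fin n → ℝ) → ℝ) where
  smul := fsmul
  one_smul _ := rfl
  mul_smul _ _ _ := rfl

theorem smul_eq_psmul (σ : Perm (Fin n)) (x : Fin n → ℝ) : σ • x = psmul σ x := rfl

theorem smul_eq_fsmul (σ : Perm (Fin n)) (φ : (Fin n → ℝ) → ℝ) : σ • φ = fsmul σ φ := rfl

theorem fsmul_apply_psmul (σ : Perm (Fin n)) (φ : (Fin n → ℝ) → ℝ) (x : Fin n → ℝ) :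
    fsmul σ φ (psmul σ x) = φ x :=
  congrArg φ (inv_smul_smul σ x)

theorem porbit_eq_of_mem {x y : Fin n → ℝ} (h : y ∈ porbit x) : porbit y = porbit x :=
  orbit_eq_iff.mpr h

theorem psmul_mem_porbit (σ : Perm (Fin n)) {x u : Fin n → ℝ} (hu : u ∈ porbit x) :
    psmul σ u ∈ porbit x := by
  obtain ⟨τ, rfl⟩ := hu
  exact ⟨σ * τ, rfl⟩

theorem porbit_eq_orbitUnder_univ (x : Fin n → ℝ) : porbit x = orbitUnder Set.univ x := by
  simp [porbit, orbitUnder]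

theorem orbitUnder_coe (K : Subgroup (Perm (Fin n))) (x : Fin n → ℝ) :
    orbitUnder K x = orbit K x := by
  ext y
  simp [orbitUnder, mem_orbit_iff, smul_eq_psmul]

theorem forbitUnder_coe (K : Subgroup (Perm (Fin n))) (φ : (Fin n → ℝ) → ℝ) :
    forbitUnder K φ = orbit K φ := by
  ext ψ
  simp [forbitUnder, mem_orbit_iff, smul_eq_fsmul]

theorem ptype_psmul (σ : Perm (Fin n)) (x : Fin n → ℝ) : ptype (psmul σ x) = ptype x := by
  have himage : Finset.univ.image (psmul σ x) = Finset.univ.image x := by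
    rw [psmul, ← Finset.image_image, Finset.image_univ_equiv]
  have hfiber : ∀ v, (Finset.univ.filter fun j => psmul σ x j = v).card
      = (Finset.univ.filter fun j => x j = v).card := fun v =>
    Finset.card_equiv σ⁻¹ fun j => by rw [Finset.mem_filter, Finset.mem_filter]; simp [psmul]
  simp only [ptype, himage, hfiber]

theorem ptype_eq_of_porbit_eq {p q : Fin n → ℝ} (h : porbit p = porbit q) :
    ptype p = ptype q := by
  obtain ⟨σ, rfl⟩ : p ∈ porbit q := h ▸ ⟨1, rfl⟩
  exact ptype_psmul σ q

theorem exists_parts_eq_ptype (x : Fin n → ℝ) : ∃ m : Nat.Partition n, m.parts = ptype x := by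
  refine ⟨⟨ptype x, ?_, ?_⟩, rfl⟩
  · simp only [ptype, Multiset.mem_map, Finset.mem_val, Finset.mem_image]
    rintro _ ⟨_, ⟨j, -, rfl⟩, rfl⟩
    exact Finset.card_pos.mpr ⟨j, by simp⟩
  · simpa [ptype, Finset.sum] using (Finset.card_eq_sum_card_image x Finset.univ).symm

theorem exists_perm_eq_iff_of_ptype_eq {x y : Fin n → ℝ} (h : ptype x = ptype y) :
    ∃ τ : Perm (Fin n), ∀ i j, x i = x j ↔ y (τ i) = y (τ j) := by
  obtain ⟨e, he⟩ := Finset.exists_equiv_of_map_val_eq h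
  let fx : Fin n → Finset.univ.image x := fun j =>
    ⟨x j, Finset.mem_image_of_mem x (Finset.mem_univ j)⟩
  let fy : Fin n → Finset.univ.image x := fun j =>
    e.symm ⟨y j, Finset.mem_image_of_mem y (Finset.mem_univ j)⟩
  have hfiber : ∀ c, Fintype.card {j // fx j = c} = Fintype.card {j // fy j = c} := fun c => by
    simp only [Fintype.card_subtype, fx, fy, Equiv.symm_apply_eq, Subtype.ext_iff]
    exact (he c).symm
  let τ : Perm (Fin n) := Equiv.ofFiberEquiv fun c => Fintype.equivOfCardEq (hfiber c)
  have hτ : ∀ j, fy (τ j) = fx j := Equiv.ofFiberEquiv_map _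
  refine ⟨τ, fun i j => ?_⟩
  calc x i = x j ↔ fx i = fx j := ⟨fun h => Subtype.ext h, congrArg Subtype.val⟩
    _ ↔ fy (τ i) = fy (τ j) := by rw [hτ, hτ]
    _ ↔ y (τ i) = y (τ j) := e.symm.injective.eq_iff.trans Subtype.ext_iff

theorem numOrbitsUnder_eq_ncard_image (H : Set (Perm (Fin n))) (S : Set (Fin n → ℝ)) :
    numOrbitsUnder H S = (orbitUnder H '' S).ncard := by
  simp only [numOrbitsUnder, Set.image, eq_comm]

theorem image_orbitUnder {φ : (Fin n → ℝ) → Fin n → ℝ}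
    (hφ : ∀ σ u, φ (psmul σ u) = psmul σ (φ u)) (H : Set (Perm (Fin n))) (z : Fin n → ℝ) :
    φ '' orbitUnder H z = orbitUnder H (φ z) := by
  ext u
  constructor
  · rintro ⟨_, ⟨σ, hσ, rfl⟩, rfl⟩
    exact ⟨σ, hσ, (hφ σ z).symm⟩
  · rintro ⟨σ, hσ, rfl⟩
    exact ⟨_, ⟨σ, hσ, rfl⟩, hφ σ z⟩

theorem numOrbitsUnder_image {φ : (Fin n → ℝ) → Fin n → ℝ}
    (hφ : ∀ σ u, φ (psmul σ u) = psmul σ (φ u)) (H : Set (Perm (Fin n))) {S : Set (Fin n → ℝ)}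
    (hS : ∀ σ ∈ H, ∀ u ∈ S, psmul σ u ∈ S) (hinj : S.InjOn φ) :
    numOrbitsUnder H (φ '' S) = numOrbitsUnder H S := by
  have hsub : ∀ z ∈ S, orbitUnder H z ⊆ S := by
    rintro z hz _ ⟨σ, hσ, rfl⟩
    exact hS σ hσ z hz
  have himage : orbitUnder H '' (φ '' S) = Set.image φ '' (orbitUnder H '' S) := by
    simp only [Set.image_image, image_orbitUnder hφ]
  have hinj' : (orbitUnder H '' S).InjOn (Set.image φ) := by
    rintro _ ⟨z₁, h₁, rfl⟩ _ ⟨z₂, h₂, rfl⟩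
    exact (hinj.image_eq_image_iff (hsub z₁ h₁) (hsub z₂ h₂)).mp
  rw [numOrbitsUnder_eq_ncard_image, numOrbitsUnder_eq_ncard_image, himage, hinj'.ncard_image]

theorem numOrbitsUnder_porbit_eq_of_eq_iff (H : Set (Perm (Fin n))) {x y : Fin n → ℝ}
    (h : ∀ i j, x i = x j ↔ y i = y j) :
    numOrbitsUnder H (porbit x) = numOrbitsUnder H (porbit y) := by
  set ψ := Function.extend x y id
  set ψ' := Function.extend y x id
  have hψ : ψ ∘ x = y :=
    funext (Function.FactorsThrough.extend_apply (fun i j => (h i j).mp) id)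
  have hψ' : ψ' ∘ y = x :=
    funext (Function.FactorsThrough.extend_apply (fun i j => (h i j).mpr) id)
  have hinv : (porbit x).LeftInvOn (ψ' ∘ ·) (ψ ∘ ·) := by
    rintro _ ⟨σ, rfl⟩
    show psmul σ (ψ' ∘ ψ ∘ x) = psmul σ x
    rw [hψ, hψ']
  have himage : (ψ ∘ ·) '' porbit x = porbit y := by
    rw [porbit_eq_orbitUnder_univ, porbit_eq_orbitUnder_univ,
      image_orbitUnder (fun _ _ => rfl), hψ]
  rw [← himage, numOrbitsUnder_image (fun _ _ => rfl) H (fun σ _ _ hu => psmul_mem_porbit σ hu)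
    hinv.injOn]

theorem numOrbitsUnder_porbit_eq_of_ptype_eq (H : Set (Perm (Fin n))) {x y : Fin n → ℝ}
    (h : ptype x = ptype y) : numOrbitsUnder H (porbit x) = numOrbitsUnder H (porbit y) := by
  obtain ⟨τ, hτ⟩ := exists_perm_eq_iff_of_ptype_eq h
  rw [numOrbitsUnder_porbit_eq_of_eq_iff H (y := psmul τ⁻¹ y) hτ, porbit_eq_of_mem ⟨τ⁻¹, rfl⟩]

def orbitsOfType (A : Set (Fin n → ℝ)) (m : Nat.Partition n) : Set (Set (Fin n → ℝ)) :=
  {O | ∃ p ∈ A, O = porbit p ∧ ptype p = m.parts}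

theorem porbit_eq_of_mem_image_orbitUnder {H : Set (Perm (Fin n))} (h1 : 1 ∈ H)
    {p q : Fin n → ℝ} {O : Set (Fin n → ℝ)}
    (hp : O ∈ orbitUnder H '' porbit p) (hq : O ∈ orbitUnder H '' porbit q) :
    porbit p = porbit q := by
  obtain ⟨x, hx, rfl⟩ := hp
  obtain ⟨y, hy, hyx⟩ := hq
  obtain ⟨σ, -, hσ⟩ : y ∈ orbitUnder H x := hyx ▸ ⟨1, h1, rfl⟩
  rw [← porbit_eq_of_mem hx, ← porbit_eq_of_mem hy]
  exact (porbit_eq_of_mem ⟨σ, hσ⟩).symm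

theorem image_orbitUnder_eq_iUnion_orbitsOfType (H : Set (Perm (Fin n)))
    {A : Set (Fin n → ℝ)} (hAsym : ∀ σ, ∀ p ∈ A, psmul σ p ∈ A) :
    orbitUnder H '' A = ⋃ m, ⋃ P ∈ orbitsOfType A m, orbitUnder H '' P := by
  ext O
  simp only [Set.mem_iUnion, exists_prop]
  constructor
  · rintro ⟨x, hx, rfl⟩
    obtain ⟨m, hm⟩ := exists_parts_eq_ptype x
    exact ⟨m, porbit x, ⟨x, hx, rfl, hm.symm⟩, x, ⟨1, rfl⟩, rfl⟩
  · rintro ⟨m, _, ⟨p, hp, rfl, -⟩, x, ⟨σ, rfl⟩, rfl⟩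
    exact ⟨psmul σ p, hAsym σ p hp, rfl⟩

theorem pairwiseDisjoint_orbitsOfType {H : Set (Perm (Fin n))} (h1 : 1 ∈ H)
    (A : Set (Fin n → ℝ)) (m : Nat.Partition n) :
    (orbitsOfType A m).PairwiseDisjoint (orbitUnder H '' ·) := by
  rintro _ ⟨p, -, rfl, -⟩ _ ⟨q, -, rfl, -⟩ hpq
  exact Set.disjoint_left.mpr fun O hp hq => hpq (porbit_eq_of_mem_image_orbitUnder h1 hp hq)

theorem pairwise_disjoint_iUnion_orbitsOfType {H : Set (Perm (Fin n))} (h1 : 1 ∈ H)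
    (A : Set (Fin n → ℝ)) :
    Pairwise (Disjoint on fun m => ⋃ P ∈ orbitsOfType A m, orbitUnder H '' P) := by
  intro m m' hmm'
  refine Set.disjoint_left.mpr fun O hO hO' => hmm' ?_
  simp only [Set.mem_iUnion, exists_prop] at hO hO'
  obtain ⟨_, ⟨p, -, rfl, hp⟩, hO⟩ := hO
  obtain ⟨_, ⟨q, -, rfl, hq⟩, hO'⟩ := hO'
  exact Nat.Partition.ext (hp.symm.trans
    ((ptype_eq_of_porbit_eq (porbit_eq_of_mem_image_orbitUnder h1 hO hO')).trans hq))

theorem numOrbitsUnder_eq_sum_ncard_orbitsOfType {H : Set (Perm (Fin n))} (h1 : 1 ∈ H)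
    {A : Set (Fin n → ℝ)} (hA : A.Finite) (hAsym : ∀ σ, ∀ p ∈ A, psmul σ p ∈ A)
    (w : Nat.Partition n → Fin n → ℝ) (hw : ∀ m, ptype (w m) = m.parts) :
    numOrbitsUnder H A = ∑ m, numOrbitsUnder H (porbit (w m)) * (orbitsOfType A m).ncard := by
  have hfinite : ∀ m, (orbitsOfType A m).Finite := fun m =>
    (hA.image porbit).subset (by rintro _ ⟨p, hp, rfl, -⟩; exact ⟨p, hp, rfl⟩)
  have hfinite_orbits : ∀ m, ∀ P ∈ orbitsOfType A m, (orbitUnder H '' P).Finite := by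
    rintro m _ ⟨p, -, rfl, -⟩
    exact (Set.finite_range fun σ => psmul σ p).image _
  rw [numOrbitsUnder_eq_ncard_image, image_orbitUnder_eq_iUnion_orbitsOfType H hAsym,
    Set.ncard_iUnion_of_finite (fun m => (hfinite m).biUnion (hfinite_orbits m))
      (pairwise_disjoint_iUnion_orbitsOfType h1 A), finsum_eq_sum_of_fintype]
  refine Finset.sum_congr rfl fun m _ => ?_
  rw [(hfinite m).ncard_biUnion (hfinite_orbits m) (pairwiseDisjoint_orbitsOfType h1 A m),
    ← finsum_one, mul_finsum_mem]
  refine finsum_mem_congr rfl ?_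
  rintro _ ⟨p, -, rfl, hp⟩
  rw [mul_one, ← numOrbitsUnder_eq_ncard_image,
    numOrbitsUnder_porbit_eq_of_ptype_eq H (hp.trans (hw m).symm)]

theorem Unisolvent.bijective_mulVec {N : ℕ} {f : Fin N → (Fin n → ℝ) → ℝ}
    {a : Fin N → Fin n → ℝ} (huni : Unisolvent (Submodule.span ℝ (Set.range f)) a)
    (hf : LinearIndependent ℝ f) [Fintype (Set.range f)] :
    Function.Bijective
      (Matrix.of fun (p : Set.range a) (φ : Set.range f) => (φ : (Fin n → ℝ) → ℝ) p).mulVec := by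
  let comb : (Set.range f → ℝ) → Submodule.span ℝ (Set.range f) := fun c =>
    ⟨∑ φ, c φ • (φ : (Fin n → ℝ) → ℝ), Submodule.sum_mem _ fun φ _ =>
      Submodule.smul_mem _ _ (Submodule.subset_span φ.2)⟩
  have hmulVec : ∀ c p, (Matrix.of fun (p : Set.range a) (φ : Set.range f) =>
      (φ : (Fin n → ℝ) → ℝ) p).mulVec c p = (comb c : (Fin n → ℝ) → ℝ) p := by
    intro c p
    simp [comb, Matrix.mulVec, dotProduct, Finset.sum_apply, mul_comm]
  have hindep : LinearIndependent ℝ (Subtype.val : Set.range f → (Fin n → ℝ) → ℝ) :=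
    (linearIndepOn_id_range_iff hf.injective).mpr hf
  constructor
  · intro c c' hcc'
    obtain ⟨g, -, hg⟩ := huni fun i => (comb c : (Fin n → ℝ) → ℝ) (a i)
    have heq : comb c = comb c' := (hg _ fun _ => rfl).trans (hg _ fun i => by
      simpa [hmulVec] using congrFun hcc'.symm ⟨a i, i, rfl⟩).symm
    exact funext (Fintype.linearIndependent_iffₛ.mp hindep c c' (congrArg Subtype.val heq))
  · intro d
    obtain ⟨g, hg, -⟩ := huni fun i => d ⟨a i, i, rfl⟩
    have hg_span : (g : (Fin n → ℝ) → ℝ) ∈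
        Submodule.span ℝ (Set.range (Subtype.val : Set.range f → (Fin n → ℝ) → ℝ)) := by
      rw [Subtype.range_coe]
      exact g.2
    obtain ⟨c, hc⟩ := (Submodule.mem_span_range_iff_exists_fun ℝ).mp hg_span
    refine ⟨c, funext ?_⟩
    rintro ⟨_, i, rfl⟩
    rw [hmulVec, ← hg i, ← hc]

theorem numOrbitsUnder_range_eq_fnumOrbitsUnder_range {N : ℕ} {f : Fin N → (Fin n → ℝ) → ℝ}
    (hf : LinearIndependent ℝ f) (hBsym : ∀ σ, ∀ g ∈ Set.range f, fsmul σ g ∈ Set.range f)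
    {a : Fin N → Fin n → ℝ} (hPsym : ∀ σ, ∀ p ∈ Set.range a, psmul σ p ∈ Set.range a)
    (huni : Unisolvent (Submodule.span ℝ (Set.range f)) a) (K : Subgroup (Perm (Fin n))) :
    numOrbitsUnder K (Set.range a) = fnumOrbitsUnder K (Set.range f) := by
  classical
  let Sa : SubMulAction K (Fin n → ℝ) := ⟨Set.range a, fun k p hp => hPsym k p hp⟩
  let Sf : SubMulAction K ((Fin n → ℝ) → ℝ) := ⟨Set.range f, fun k φ hφ => hBsym k φ hφ⟩
  let _ : MulAction K (Set.range a) := SubMulAction.mulAction Sa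
  let _ : MulAction K (Set.range f) := SubMulAction.mulAction Sf
  have hfixed : ∀ g : K, (fixedBy (Set.range a) g).ncard = (fixedBy (Set.range f) g).ncard :=
    fun g => Matrix.ncard_fixedPoints_eq_of_bijective_mulVec (huni.bijective_mulVec hf)
      (π := toPerm g) (ρ := toPerm g) fun p φ => fsmul_apply_psmul (g : Perm (Fin n)) φ.1 p.1
  calc numOrbitsUnder K (Set.range a) = Nat.card (orbitRel.Quotient K (Set.range a)) := by
        simp only [numOrbitsUnder, orbitUnder_coe]
        exact Sa.ncard_orbits_eq_card_orbitRel_quotient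
    _ = Nat.card (orbitRel.Quotient K (Set.range f)) :=
        card_orbitRel_quotient_eq_of_ncard_fixedBy_eq hfixed
    _ = fnumOrbitsUnder K (Set.range f) := by
        simp only [fnumOrbitsUnder, forbitUnder_coe]
        exact Sf.ncard_orbits_eq_card_orbitRel_quotient.symm

end PermutationAction

theorem stmt_7_general {n N : ℕ} (f : Fin N → ((Fin n → ℝ) → ℝ)) (hf : LinearIndependent ℝ f)
    (hBsym : ∀ σ, ∀ g ∈ Set.range f, fsmul σ g ∈ Set.range f)
    (a : Fin N → (Fin n → ℝ))
    (hPsym : ∀ σ, ∀ p ∈ Set.range a, psmul σ p ∈ Set.range a)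
    (huni : Unisolvent (Submodule.span ℝ (Set.range f)) a)
    (w : Nat.Partition n → (Fin n → ℝ)) (hw : ∀ l, ptype (w l) = l.parts) :
    ∀ l : Nat.Partition n,
      ∑ m : Nat.Partition n,
        numOrbitsUnder (stab (w l)) (porbit (w m)) *
          {O : Set (Fin n → ℝ) | ∃ p ∈ Set.range a, O = porbit p ∧ ptype p = m.parts}.ncard
      = fnumOrbitsUnder (stab (w l)) (Set.range f) := by
  intro l
  have hone : (1 : Perm (Fin n)) ∈ stab (w l) := rfl
  calc _ = numOrbitsUnder (stab (w l)) (Set.range a) :=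
        (numOrbitsUnder_eq_sum_ncard_orbitsOfType hone (Set.finite_range a) hPsym w hw).symm
    _ = fnumOrbitsUnder (stab (w l)) (Set.range f) :=
        numOrbitsUnder_range_eq_fnumOrbitsUnder_range hf hBsym hPsym huni (stabilizer _ (w l))

/-- in the symmetric unisolvent setup, with `w λ` a chosen point of type `λ` for
each partition `λ` of `n`, `H_λ = Stab (w λ)`, `v_{λμ}` the number of `H_λ`-orbits of the
`S_n`-orbit of `w μ`, `X_μ` the number of `S_n`-orbits of `P` of type `μ`, and `r_λ` the number
of `H_λ`-orbits of `B`, we have `Σ_μ v_{λμ} · X_μ = r_λ` for every partition `λ` of `n`. -/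
theorem stmt_7 {n N : ℕ} (f : Fin N → ((Fin n → ℝ) → ℝ)) (hf : LinearIndependent ℝ f)
    (hBsym : ∀ σ, ∀ g ∈ Set.range f, fsmul σ g ∈ Set.range f)
    (a : Fin N → (Fin n → ℝ)) (ha : Function.Injective a)
    (hPsym : ∀ σ, ∀ p ∈ Set.range a, psmul σ p ∈ Set.range a)
    (huni : Unisolvent (Submodule.span ℝ (Set.range f)) a)
    (w : Nat.Partition n → (Fin n → ℝ)) (hw : ∀ l, ptype (w l) = l.parts) :
    ∀ l : Nat.Partition n,
      ∑ m : Nat.Partition n,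
        numOrbitsUnder (stab (w l)) (porbit (w m)) *
          {O : Set (Fin n → ℝ) | ∃ p ∈ Set.range a, O = porbit p ∧ ptype p = m.parts}.ncard
      = fnumOrbitsUnder (stab (w l)) (Set.range f) :=
  stmt_7_general f hf hBsym a hPsym huni w hw
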